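/- Let ρ: ω → (0,∞) be a C² function on a domain ω ⊂ Sⁿ and let r(x) = ρ(x)x be the position vector of the graph hypersurface R. If γ(x) = x - 2⟨x, N(x)⟩N(x) is the reflection map, where N is the unit normal of R, then for all coordinate directions i, j one has ⟨∂ᵢr, ∂ⱼγ⟩ = ⟨∂ⱼr, ∂ᵢγ⟩. -/

import Mathlib

/-!
Since `x` is a unit vector, `⟨∂ᵢx, x⟩ = 0`, so `⟨∂ᵢr, x⟩ = ∂ᵢρ`; as `N ⊥ ∂ᵢr`, also
`⟨∂ᵢr, γ⟩ = ∂ᵢρ`. Differentiating this identity in the direction `j` gives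
`⟨∂ⱼ∂ᵢr, γ⟩ + ⟨∂ᵢr, ∂ⱼγ⟩ = ∂ⱼ∂ᵢρ`, and the symmetry of the second derivatives of `r` and `ρ`
makes `⟨∂ᵢr, ∂ⱼγ⟩` symmetric in `i, j`.
-/

open scoped RealInnerProductSpace Topology

/-- Partial derivative of a map from parameter space `Fin n → ℝ` in the `i`-th
coordinate direction. -/
noncomputable def pd {n : ℕ} {F : Type*} [NormedAddCommGroup F] [NormedSpace ℝ F]
    (f : (Fin n → ℝ) → F) (u : Fin n → ℝ) (i : Fin n) : F :=
  fderiv ℝ f u (Pi.single i 1)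

section PartialDerivative

variable {n : ℕ} {F : Type*} [NormedAddCommGroup F] [NormedSpace ℝ F]
  {f g : (Fin n → ℝ) → F} {u : Fin n → ℝ}

theorem Filter.EventuallyEq.pd_eq (h : f =ᶠ[𝓝 u] g) : pd f u = pd g u := by
  unfold pd
  rw [h.fderiv_eq]

theorem pd_smul {c : (Fin n → ℝ) → ℝ} (hc : DifferentiableAt ℝ c u)
    (hf : DifferentiableAt ℝ f u) (i : Fin n) :
    pd (fun w => c w • f w) u i = pd c u i • f u + c u • pd f u i := by
  simp only [pd, fderiv_fun_smul hc hf, add_apply,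
    smul_apply, ContinuousLinearMap.smulRight_apply]
  abel

theorem hasFDerivAt_pd (hf : ContDiffAt ℝ 2 f u) (i : Fin n) :
    HasFDerivAt (fun w => pd f w i)
      ((ContinuousLinearMap.apply ℝ F (Pi.single i 1)).comp (fderiv ℝ (fderiv ℝ f) u)) u := by
  have hd : DifferentiableAt ℝ (fderiv ℝ f) u :=
    (hf.fderiv_right one_add_one_eq_two.le).differentiableAt one_ne_zero
  exact (ContinuousLinearMap.apply ℝ F (Pi.single i 1)).hasFDerivAt.comp u hd.hasFDerivAt

theorem pd_pd_comm (hf : ContDiffAt ℝ 2 f u) (i j : Fin n) :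
    pd (fun w => pd f w i) u j = pd (fun w => pd f w j) u i := by
  rw [pd, pd, (hasFDerivAt_pd hf i).fderiv, (hasFDerivAt_pd hf j).fderiv]
  exact (hf.isSymmSndFDerivAt (by simp)).eq _ _

end PartialDerivative

section InnerProduct

variable {n : ℕ} {E : Type*} [NormedAddCommGroup E] [InnerProductSpace ℝ E]
  {f g : (Fin n → ℝ) → E} {u : Fin n → ℝ}

theorem pd_inner (hf : DifferentiableAt ℝ f u) (hg : DifferentiableAt ℝ g u) (i : Fin n) :
    pd (fun w => ⟪f w, g w⟫) u i = ⟪pd f u i, g u⟫ + ⟪f u, pd g u i⟫ := by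
  rw [pd, fderiv_inner_apply ℝ hf hg, add_comm]
  rfl

theorem inner_pd_self_eq_zero {c : ℝ} (hf : DifferentiableAt ℝ f u)
    (hnorm : ∀ᶠ w in 𝓝 u, ‖f w‖ = c) (i : Fin n) : ⟪pd f u i, f u⟫ = 0 := by
  have hconst : (fun w => ⟪f w, f w⟫) =ᶠ[𝓝 u] fun _ => c ^ 2 :=
    hnorm.mono fun w hw => show ⟪f w, f w⟫ = c ^ 2 by rw [real_inner_self_eq_norm_sq, hw]
  have h := pd_inner hf hf i
  rw [hconst.pd_eq, pd, fderiv_const_apply, zero_apply, real_inner_comm (pd f u i) (f u)] at h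
  linarith

theorem inner_pd_smul_self {c : (Fin n → ℝ) → ℝ} (hc : DifferentiableAt ℝ c u)
    (hf : DifferentiableAt ℝ f u) (hunit : ∀ᶠ w in 𝓝 u, ‖f w‖ = 1) (i : Fin n) :
    ⟪pd (fun w => c w • f w) u i, f u⟫ = pd c u i := by
  have hf1 : ⟪f u, f u⟫ = 1 := by
    rw [real_inner_self_eq_norm_sq, hunit.self_of_nhds, one_pow]
  rw [pd_smul hc hf, inner_add_left, real_inner_smul_left, real_inner_smul_left, hf1,
    inner_pd_self_eq_zero hf hunit, mul_zero, add_zero, mul_one]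

/-- The exact 1-form `⟨da, g⟩ = dφ` is closed. -/
theorem inner_pd_comm_of_inner_pd_eq_pd {a : (Fin n → ℝ) → E} {φ : (Fin n → ℝ) → ℝ}
    (ha : ContDiffAt ℝ 2 a u) (hg : DifferentiableAt ℝ g u) (hφ : ContDiffAt ℝ 2 φ u)
    (h : ∀ᶠ w in 𝓝 u, ∀ i, ⟪pd a w i, g w⟫ = pd φ w i) (i j : Fin n) :
    ⟪pd a u i, pd g u j⟫ = ⟪pd a u j, pd g u i⟫ := by
  have hexpand : ∀ i j, ⟪pd a u i, pd g u j⟫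
      = pd (fun w => pd φ w i) u j - ⟪pd (fun w => pd a w i) u j, g u⟫ := by
    intro i j
    have hi : (fun w => ⟪pd a w i, g w⟫) =ᶠ[𝓝 u] fun w => pd φ w i := h.mono fun w hw => hw i
    have hderiv := pd_inner (hasFDerivAt_pd ha i).differentiableAt hg j
    rw [hi.pd_eq] at hderiv
    linarith
  rw [hexpand, hexpand, pd_pd_comm ha, pd_pd_comm hφ]

end InnerProduct

theorem symmetry_of_reflection_form_general
    {n : ℕ}
    (ω : Set (Fin n → ℝ)) (hω : IsOpen ω)
    (x : (Fin n → ℝ) → EuclideanSpace ℝ (Fin (n + 1)))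
    (ρ : (Fin n → ℝ) → ℝ)
    (N γ r : (Fin n → ℝ) → EuclideanSpace ℝ (Fin (n + 1)))
    (hx : ContDiffOn ℝ 2 x ω)
    (hρ : ContDiffOn ℝ 2 ρ ω)
    (hxunit : ∀ u ∈ ω, ‖x u‖ = 1)
    (hr : ∀ u ∈ ω, r u = ρ u • x u)
    (hNperp : ∀ u ∈ ω, ∀ i, ⟪N u, pd r u i⟫ = 0)
    (hNsmooth : ContDiffOn ℝ 1 N ω)
    (hγ : ∀ u ∈ ω, γ u = x u - (2 * ⟪x u, N u⟫) • N u) :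
    ∀ u ∈ ω, ∀ i j : Fin n,
      ⟪pd r u i, pd γ u j⟫ = ⟪pd r u j, pd γ u i⟫ := by
  have hr_eq : ∀ u ∈ ω, r =ᶠ[𝓝 u] fun w => ρ w • x w := fun u hu =>
    Filter.eventually_of_mem (hω.mem_nhds hu) hr
  have hxunit_near : ∀ u ∈ ω, ∀ᶠ w in 𝓝 u, ‖x w‖ = 1 := fun u hu =>
    Filter.eventually_of_mem (hω.mem_nhds hu) hxunit
  intro u hu i j
  have hU : ω ∈ 𝓝 u := hω.mem_nhds hu
  have hrC : ContDiffAt ℝ 2 r u :=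
    ((hρ.contDiffAt hU).smul (hx.contDiffAt hU)).congr_of_eventuallyEq (hr_eq u hu)
  have hγd : DifferentiableAt ℝ γ u := by
    have hxd := (hx.contDiffAt hU).differentiableAt two_ne_zero
    have hNd := (hNsmooth.contDiffAt hU).differentiableAt one_ne_zero
    exact (hxd.sub (((hxd.inner ℝ hNd).const_mul 2).smul hNd)).congr_of_eventuallyEq
      (Filter.eventually_of_mem hU hγ)
  -- law of reflection: `⟨∂ᵢr, γ⟩ = ∂ᵢρ`
  refine inner_pd_comm_of_inner_pd_eq_pd hrC hγd (hρ.contDiffAt hU) ?_ i j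
  filter_upwards [hU] with w hw k
  have hW : ω ∈ 𝓝 w := hω.mem_nhds hw
  rw [hγ w hw, inner_sub_right, real_inner_smul_right, real_inner_comm (N w) (pd r w k),
    hNperp w hw k, mul_zero, sub_zero, (hr_eq w hw).pd_eq,
    inner_pd_smul_self ((hρ.contDiffAt hW).differentiableAt two_ne_zero)
      ((hx.contDiffAt hW).differentiableAt two_ne_zero) (hxunit_near w hw)]

/-- For the reflector hypersurface `r = ρ • x` over a domain
`ω ⊂ Sⁿ` and the reflection map `γ = x - 2⟨x,N⟩N`, the bilinear form
`⟨∂ᵢr, ∂ⱼγ⟩` is symmetric in `i, j`. -/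
theorem symmetry_of_reflection_form
    {n : ℕ}
    (ω : Set (Fin n → ℝ)) (hω : IsOpen ω)
    (x : (Fin n → ℝ) → EuclideanSpace ℝ (Fin (n + 1)))
    (ρ : (Fin n → ℝ) → ℝ)
    (N γ r : (Fin n → ℝ) → EuclideanSpace ℝ (Fin (n + 1)))
    (hx : ContDiffOn ℝ 2 x ω)
    (hρ : ContDiffOn ℝ 2 ρ ω)
    (hρpos : ∀ u ∈ ω, 0 < ρ u)
    (hxunit : ∀ u ∈ ω, ‖x u‖ = 1)
    (hr : ∀ u ∈ ω, r u = ρ u • x u)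
    (hNunit : ∀ u ∈ ω, ‖N u‖ = 1)
    (hNperp : ∀ u ∈ ω, ∀ i, ⟪N u, pd r u i⟫ = 0)
    (hNsmooth : ContDiffOn ℝ 1 N ω)
    (hγ : ∀ u ∈ ω, γ u = x u - (2 * ⟪x u, N u⟫) • N u) :
    ∀ u ∈ ω, ∀ i j : Fin n,
      ⟪pd r u i, pd γ u j⟫ = ⟪pd r u j, pd γ u i⟫ :=
  symmetry_of_reflection_form_general ω hω x ρ N γ r hx hρ hxunit hr hNperp hNsmooth hγ
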